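/- arXiv:1310.8141 — 3 statements merged into one kernel-verified Lean document; each statement's English description precedes it below -/
import Mathlib

section
/- Let R be a commutative ring containing ℚ equipped with a derivation ∂ such that R has no nontrivial ∂-invariant ideals (i.e. R is ∂-simple) and R ≠ 0. Then R is an integral domain. -/
/-!
Two kinds of ideals are `D`-invariant. For every `a`, the ideal of elements killed by a power
of `a` is: from `a ^ n * x = 0`, differentiating and multiplying by `a ^ n` gives
`a ^ (2 * n) * D x = 0`. Over `ℚ` the nilradical is too: differentiating
`a ^ (m + 1) * (D a) ^ r = 0`, multiplying by `D a` and dividing by `m + 1` gives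
`a ^ m * (D a) ^ (r + 2) = 0`, so `a ^ n = 0` forces `(D a) ^ (2 * n) = 0`.
By `D`-simplicity the nilradical is zero, and if `a * b = 0` with `b ≠ 0` then the ideal
killed by powers of `a` is everything, so `a` is nilpotent, hence zero.
-/

theorem isUnit_natCast_of_ne_zero {R : Type*} [Ring R] [Algebra ℚ R] {n : ℕ} (hn : n ≠ 0) :
    IsUnit (n : R) := by
  simpa using (IsUnit.mk0 (n : ℚ) (by exact_mod_cast hn)).map (algebraMap ℚ R)

namespace Derivation

variable {A R : Type*} [CommSemiring A] [CommRing R] [Algebra A R] (D : Derivation A R R)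

theorem pow_mul_apply_pow_eq_zero_of_succ [Algebra ℚ R] {a : R} {m r : ℕ}
    (h : a ^ (m + 1) * D a ^ r = 0) : a ^ m * D a ^ (r + 2) = 0 := by
  have hD : D (a ^ (m + 1) * D a ^ r) * D a = 0 := by rw [h, map_zero, zero_mul]
  have hr : D (D a ^ r) * D a = r * D a ^ r * D (D a) := by
    rcases r with _ | s
    · simp
    · rw [leibniz_pow, Nat.add_sub_cancel]; simp only [smul_eq_mul, nsmul_eq_mul]; ring
  rw [leibniz, smul_eq_mul, smul_eq_mul, add_mul, mul_assoc, hr, leibniz_pow] at hD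
  simp only [smul_eq_mul, nsmul_eq_mul, add_tsub_cancel_right] at hD
  refine (isUnit_natCast_of_ne_zero (R := R) m.succ_ne_zero).mul_right_eq_zero.mp ?_
  push_cast at hD ⊢
  linear_combination hD - r * D (D a) * h

theorem pow_add_mul_apply_pow_eq_zero [Algebra ℚ R] {a : R} {m j r : ℕ}
    (h : a ^ (m + j) * D a ^ r = 0) : a ^ m * D a ^ (r + 2 * j) = 0 := by
  induction j generalizing m with
  | zero => exact h
  | succ j ih =>
    rw [mul_add_one, ← add_assoc]
    exact D.pow_mul_apply_pow_eq_zero_of_succ (ih (by rwa [add_right_comm, add_assoc]))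

theorem isNilpotent_apply [Algebra ℚ R] {a : R} (ha : IsNilpotent a) : IsNilpotent (D a) := by
  obtain ⟨n, hn⟩ := ha
  refine ⟨2 * n, ?_⟩
  simpa using D.pow_add_mul_apply_pow_eq_zero (m := 0) (j := n) (r := 0) (by simpa using hn)

theorem apply_mem_torsion'_powers {a x : R}
    (hx : x ∈ Submodule.torsion' R R (Submonoid.powers a)) :
    D x ∈ Submodule.torsion' R R (Submonoid.powers a) := by
  obtain ⟨⟨_, n, rfl⟩, hx⟩ := hx
  change a ^ n * x = 0 at hx
  refine ⟨⟨a ^ n * a ^ n, n + n, pow_add a n n⟩, ?_⟩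
  change a ^ n * a ^ n * D x = 0
  have hD : a ^ n * D (a ^ n * x) = 0 := by rw [hx, map_zero, mul_zero]
  rw [leibniz, smul_eq_mul, smul_eq_mul] at hD
  linear_combination hD - D (a ^ n) * hx

def IsSimple (D : Derivation A R R) : Prop :=
  ∀ I : Ideal R, (∀ a ∈ I, D a ∈ I) → I = ⊥ ∨ I = ⊤

variable {D}

theorem IsSimple.isReduced [Algebra ℚ R] [Nontrivial R] (hD : D.IsSimple) : IsReduced R := by
  refine nilradical_eq_bot_iff.mp ((hD _ fun a => D.isNilpotent_apply).resolve_right fun h => ?_)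
  exact not_isNilpotent_one (show (1 : R) ∈ nilradical R from h ▸ Submodule.mem_top)

theorem IsSimple.noZeroDivisors [IsReduced R] (hD : D.IsSimple) : NoZeroDivisors R := by
  refine ⟨fun {a b} hab => or_iff_not_imp_right.mpr fun hb => ?_⟩
  have hb_mem : b ∈ Submodule.torsion' R R (Submonoid.powers a) := ⟨⟨a, 1, pow_one a⟩, hab⟩
  rcases hD _ fun x => D.apply_mem_torsion'_powers with h | h
  · exact absurd ((Submodule.mem_bot R).mp (h ▸ hb_mem)) hb
  · obtain ⟨⟨_, n, rfl⟩, hn⟩ := (h ▸ Submodule.mem_top : (1 : R) ∈ Submodule.torsion' R R _)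
    exact IsReduced.eq_zero a ⟨n, by simpa [Submonoid.smul_def] using hn⟩

theorem IsSimple.isDomain [Algebra ℚ R] [Nontrivial R] (hD : D.IsSimple) : IsDomain R :=
  have := hD.isReduced
  have := hD.noZeroDivisors
  NoZeroDivisors.to_isDomain R

end Derivation

/-- A commutative ring containing ℚ with a derivation `D` such that `R` is `D`-simple
(no nontrivial `D`-invariant ideals) and `R ≠ 0` is an integral domain. -/
theorem stmt_0 (R : Type*) [CommRing R] [Algebra ℚ R] [Nontrivial R]
    (D : R → R)
    (hadd : ∀ a b : R, D (a + b) = D a + D b)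
    (hleib : ∀ a b : R, D (a * b) = D a * b + a * D b)
    (hsimple : ∀ I : Ideal R, (∀ a ∈ I, D a ∈ I) → I = ⊥ ∨ I = ⊤) :
    IsDomain R := by
  let D' : Derivation ℤ R R :=
    Derivation.mk' (AddMonoidHom.mk' D hadd).toIntLinearMap fun a b => by
      simp only [AddMonoidHom.coe_toIntLinearMap, AddMonoidHom.mk'_apply, smul_eq_mul, hleib]
      ring
  exact Derivation.IsSimple.isDomain (D := D') hsimple
end

section
/- Let k be a field of characteristic zero. The element f = Σ_{n≥1} ((−1)^{n+1}/n) x^{−n} tⁿ of k((x))((t)) does not lie in the image of the natural embedding of k((t))(x) into k((x))((t)). -/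
/-!
Suppose `f = φ (p / q)`, so that `φ p = φ q * f`. Write `q = ∑ⱼ qⱼ Xʲ` and let `q_{j,n}` be the
coefficient of `tⁿ` in `qⱼ`. The image of a polynomial contains no negative powers of `x`, while
the coefficient of `tᵐ x⁻ʳ` (`r ≥ 1`) in `φ q * f` is `∑ⱼ q_{j,m-j-r} (-1)^(j+r+1) / (j + r)`.
Hence, for every `N`, the partial fraction `∑ⱼ (-1)ʲ q_{j,N-j} / (r + j)` vanishes at all
`r = 1, 2, …`; clearing denominators, a polynomial with infinitely many roots forces every
`q_{j,N-j}` to vanish, so `q = 0`, which is absurd.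
-/

open Polynomial Lagrange in
theorem eq_zero_of_sum_div_sub_eq_zero {k ι : Type*} [Field k] {s : Finset ι}
    {v : ι → k} (hv : Set.InjOn v s) {w : ι → k} {T : Set k} (hT : T.Infinite)
    (h : ∀ x ∈ T, ∑ j ∈ s, w j / (x - v j) = 0) : ∀ j ∈ s, w j = 0 := by
  classical
  set P : k[X] := ∑ j ∈ s, C (w j) * nodal (s.erase j) v
  have hP : P = 0 := by
    refine eq_zero_of_infinite_isRoot P ((hT.sdiff (s.finite_toSet.image v)).mono ?_)
    rintro x ⟨hxT, hxv⟩
    have hx : ∀ j ∈ s, x - v j ≠ 0 := fun j hj =>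
      sub_ne_zero.mpr fun hxj => hxv ⟨j, hj, hxj.symm⟩
    have hPx : P.eval x = (∑ j ∈ s, w j / (x - v j)) * (nodal s v).eval x := by
      simp only [P, eval_finsetSum, eval_mul, eval_C, Finset.sum_mul]
      refine Finset.sum_congr rfl fun j hj => ?_
      rw [nodal_eq_mul_nodal_erase hj, eval_mul, eval_sub, eval_X, eval_C]
      field_simp [hx j hj]
    simp [IsRoot, hPx, h x hxT]
  intro j hj
  have hPj := congrArg (eval (v j)) hP
  rw [eval_finsetSum, Finset.sum_eq_single j, eval_zero, eval_mul, eval_C] at hPj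
  · refine (mul_eq_zero.mp hPj).resolve_right (eval_nodal_not_at_node fun i hi hji => ?_)
    exact (Finset.mem_erase.mp hi).1 (hv (Finset.mem_of_mem_erase hi) hj hji.symm)
  · intro i _ hij
    rw [eval_mul, eval_nodal_at_node (Finset.mem_erase.mpr ⟨Ne.symm hij, hj⟩), mul_zero]
  · exact fun hj' => absurd hj hj'

theorem eq_zero_of_sum_mul_neg_one_pow_div_eq_zero {k : Type*} [Field k] [CharZero k]
    {s : Finset ℕ} {w : ℕ → k}
    (h : ∀ r : ℕ, 1 ≤ r → ∑ j ∈ s, w j * ((-1) ^ (j + r + 1) / ((j + r : ℕ) : k)) = 0) :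
    ∀ j ∈ s, w j = 0 := by
  have hv : Set.InjOn (fun j : ℕ => -(j : k)) s := fun i _ j _ hij => by simpa using hij
  have hT : (Set.range fun r : ℕ => ((r + 1 : ℕ) : k)).Infinite :=
    Set.infinite_range_of_injective (Nat.cast_injective.comp Nat.succ_injective)
  have hw := eq_zero_of_sum_div_sub_eq_zero hv (w := fun j => (-1) ^ j * w j) hT ?_
  · exact fun j hj => by simpa using hw j hj
  rintro _ ⟨r, rfl⟩
  have hsign : ∀ j : ℕ, ((-1 : k) ^ r) * (-1) ^ (j + (r + 1) + 1) = (-1) ^ j := fun j => by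
    rw [← pow_add, show r + (j + (r + 1) + 1) = j + 2 * (r + 1) by ring, pow_add, pow_mul]
    norm_num
  calc ∑ j ∈ s, (-1) ^ j * w j / (((r + 1 : ℕ) : k) - -(j : k))
      = (-1) ^ r * ∑ j ∈ s, w j * ((-1) ^ (j + (r + 1) + 1) / ((j + (r + 1) : ℕ) : k)) := by
        rw [Finset.mul_sum]
        refine Finset.sum_congr rfl fun j _ => ?_
        rw [← hsign j]
        push_cast
        ring
    _ = 0 := by rw [h (r + 1) (by omega), mul_zero]

theorem HahnSeries.coeff_coeff_mul_of_coeff_eq_C {Γ Γ' R : Type*} [AddCommGroup Γ]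
    [PartialOrder Γ] [IsOrderedCancelAddMonoid Γ] [AddCommMonoid Γ'] [PartialOrder Γ']
    [IsOrderedCancelAddMonoid Γ'] [Semiring R] {a : HahnSeries Γ R}
    {F g : HahnSeries Γ (HahnSeries Γ' R)} (hF : ∀ n, F.coeff n = C (a.coeff n))
    {e : Γ'} {n₀ : Γ} (hg : ∀ n ≠ n₀, (g.coeff n).coeff e = 0) (m : Γ) :
    ((F * g).coeff m).coeff e = a.coeff (m - n₀) * (g.coeff n₀).coeff e := by
  have hterm : ∀ i n, (F.coeff i * g.coeff n).coeff e = a.coeff i * (g.coeff n).coeff e :=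
    fun i n => by rw [hF, C_apply, coeff_single_zero_mul]
  rw [coeff_mul, coeff_sum, Finset.sum_congr rfl fun p _ => hterm p.1 p.2]
  by_cases hgn₀ : (g.coeff n₀).coeff e = 0
  · rw [hgn₀, mul_zero]
    refine Finset.sum_eq_zero fun p _ => ?_
    obtain hp | hp := eq_or_ne p.2 n₀
    · rw [hp, hgn₀, mul_zero]
    · rw [hg _ hp, mul_zero]
  rw [Finset.sum_eq_single (m - n₀, n₀)]
  · rintro ⟨i, n⟩ hin hne
    rw [Finset.mem_antidiagonal] at hin
    have hn : n ≠ n₀ := by rintro rfl; exact hne (by simp [← hin.2.2])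
    rw [hg n hn, mul_zero]
  · intro hnot
    suffices a.coeff (m - n₀) = 0 by rw [this, zero_mul]
    by_contra ha
    refine hnot (Finset.mem_antidiagonal.mpr ⟨?_, ?_, by simp⟩)
    · rw [mem_support, hF]
      exact fun h => ha (by simpa using congrArg (coeff · 0) h)
    · exact fun h0 => hgn₀ (by rw [h0, coeff_zero])

section

open HahnSeries

variable {k : Type*} [Field k]

theorem coeff_coeff_C_single_mul_of_coeff_eq {f : LaurentSeries (LaurentSeries k)}
    (hf1 : ∀ n : ℕ, 1 ≤ n →
      f.coeff (n : ℤ) = single (-(n : ℤ)) (((-1) ^ (n + 1) : k) / (n : k)))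
    (hf2 : ∀ n : ℤ, n < 1 → f.coeff n = 0) (j r : ℕ) (hr : 1 ≤ r) (n : ℤ) :
    ((C (single (j : ℤ) 1) * f).coeff n).coeff (-r) =
      if n = ((j + r : ℕ) : ℤ) then ((-1) ^ (j + r + 1) : k) / ((j + r : ℕ) : k) else 0 := by
  rw [C_apply, coeff_single_zero_mul]
  obtain hn | ⟨s, hs, rfl⟩ : n < 1 ∨ ∃ s : ℕ, 1 ≤ s ∧ n = s := by
    rcases lt_or_ge n 1 with h | h
    · exact .inl h
    · exact .inr ⟨n.toNat, by omega, by omega⟩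
  · rw [hf2 n hn, mul_zero, coeff_zero, if_neg (by omega)]
  · rw [hf1 s hs, single_mul_single, one_mul, coeff_single]
    by_cases hsjr : s = j + r
    · subst hsjr
      simp
    · rw [if_neg (by omega), if_neg (by omega)]

variable {φ : RatFunc (LaurentSeries k) →+* LaurentSeries (LaurentSeries k)}

theorem coeff_coeff_map_mul_eq_sum (hX : φ RatFunc.X = C (single (1 : ℤ) (1 : k)))
    (P : Polynomial (LaurentSeries k)) (g : LaurentSeries (LaurentSeries k)) (m e : ℤ) :
    ((φ (algebraMap _ _ P) * g).coeff m).coeff e = ∑ j ∈ P.support,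
      ((φ (RatFunc.C (P.coeff j)) * (C (single (j : ℤ) 1) * g)).coeff m).coeff e := by
  have hφ : φ.comp (algebraMap _ (RatFunc _)) =
      Polynomial.eval₂RingHom (φ.comp RatFunc.C) (φ RatFunc.X) :=
    Polynomial.ringHom_ext (fun a => by simp [RatFunc.algebraMap_C])
      (by simp [RatFunc.algebraMap_X])
  rw [← RingHom.comp_apply, hφ, Polynomial.coe_eval₂RingHom, Polynomial.eval₂_eq_sum,
    Polynomial.sum_def, Finset.sum_mul, coeff_sum, coeff_sum]
  refine Finset.sum_congr rfl fun j _ => ?_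
  rw [hX, ← map_pow, single_pow, one_pow, nsmul_one, mul_assoc, RingHom.comp_apply]

theorem coeff_coeff_map_algebraMap_of_neg (hX : φ RatFunc.X = C (single (1 : ℤ) (1 : k)))
    (hC : ∀ (a : LaurentSeries k) (n : ℤ), (φ (RatFunc.C a)).coeff n = C (a.coeff n))
    (P : Polynomial (LaurentSeries k)) (m : ℤ) {e : ℤ} (he : e < 0) :
    ((φ (algebraMap _ _ P)).coeff m).coeff e = 0 := by
  rw [← mul_one (φ _), coeff_coeff_map_mul_eq_sum hX]
  refine Finset.sum_eq_zero fun j _ => ?_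
  rw [coeff_coeff_mul_of_coeff_eq_C (hC _) (n₀ := 0)
    (fun n hn => by rw [mul_one, C_apply, coeff_single_of_ne hn, coeff_zero])]
  simp [coeff_single_of_ne (show e ≠ j by omega)]

theorem coeff_coeff_map_algebraMap_mul_of_coeff_eq
    (hX : φ RatFunc.X = C (single (1 : ℤ) (1 : k)))
    (hC : ∀ (a : LaurentSeries k) (n : ℤ), (φ (RatFunc.C a)).coeff n = C (a.coeff n))
    {f : LaurentSeries (LaurentSeries k)}
    (hf1 : ∀ n : ℕ, 1 ≤ n →
      f.coeff (n : ℤ) = single (-(n : ℤ)) (((-1) ^ (n + 1) : k) / (n : k)))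
    (hf2 : ∀ n : ℤ, n < 1 → f.coeff n = 0) (P : Polynomial (LaurentSeries k)) (m : ℤ) (r : ℕ)
    (hr : 1 ≤ r) :
    ((φ (algebraMap _ _ P) * f).coeff m).coeff (-r) = ∑ j ∈ P.support,
      (P.coeff j).coeff (m - (j + r : ℕ)) * (((-1) ^ (j + r + 1) : k) / ((j + r : ℕ) : k)) := by
  rw [coeff_coeff_map_mul_eq_sum hX]
  refine Finset.sum_congr rfl fun j _ => ?_
  have hslice := coeff_coeff_C_single_mul_of_coeff_eq hf1 hf2 j r hr
  rw [coeff_coeff_mul_of_coeff_eq_C (hC _) (n₀ := (j + r : ℕ))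
    (fun n hn => by rw [hslice, if_neg hn]), hslice, if_pos rfl]

end

/-- The element `f = Σ_{n≥1} ((-1)^{n+1}/n) x^{-n} tⁿ` of `k((x))((t))` is not in the
image of the natural embedding of `k((t))(x)` into `k((x))((t))` (any ring homomorphism
sending `X` to `x` and Laurent series in `t` to themselves coefficientwise). -/
theorem stmt_12 (k : Type*) [Field k] [CharZero k]
    (φ : RatFunc (LaurentSeries k) →+* LaurentSeries (LaurentSeries k))
    (hX : φ RatFunc.X = HahnSeries.C (HahnSeries.single (1 : ℤ) (1 : k)))
    (hC : ∀ (a : LaurentSeries k) (n : ℤ),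
      (φ (RatFunc.C a)).coeff n = HahnSeries.C (a.coeff n))
    (f : LaurentSeries (LaurentSeries k))
    (hf1 : ∀ n : ℕ, 1 ≤ n →
      f.coeff (n : ℤ) = HahnSeries.single (-(n : ℤ)) (((-1) ^ (n + 1) : k) / (n : k)))
    (hf2 : ∀ n : ℤ, n < 1 → f.coeff n = 0) :
    f ∉ Set.range φ := by
  rintro ⟨g, hg⟩
  have hnum : φ (algebraMap _ _ g.num) = φ (algebraMap _ _ g.denom) * f := by
    rw [(div_eq_iff (RatFunc.algebraMap_ne_zero g.denom_ne_zero)).mp g.num_div_denom, map_mul,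
      hg, mul_comm]
  have hsum : ∀ N : ℤ, ∀ r : ℕ, 1 ≤ r → ∑ j ∈ g.denom.support,
      (g.denom.coeff j).coeff (N - j) * (((-1) ^ (j + r + 1) : k) / ((j + r : ℕ) : k)) = 0 := by
    intro N r hr
    have h := congrArg (fun F => (F.coeff (N + r)).coeff (-r)) hnum
    simp only [coeff_coeff_map_algebraMap_of_neg hX hC _ _ (by omega : -(r : ℤ) < 0),
      coeff_coeff_map_algebraMap_mul_of_coeff_eq hX hC hf1 hf2 _ _ r hr] at h
    refine (Finset.sum_congr rfl fun j _ => ?_).trans h.symm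
    congr 2
    push_cast
    ring
  have hd := Polynomial.natDegree_mem_support_of_nonzero g.denom_ne_zero
  refine Polynomial.mem_support_iff.mp hd (HahnSeries.ext (funext fun N => ?_))
  have hcoeff := eq_zero_of_sum_mul_neg_one_pow_div_eq_zero (hsum (N + g.denom.natDegree)) _ hd
  rwa [add_sub_cancel_right] at hcoeff
end

section
/- Let k be a field and n ≥ 1. Every invertible element u of k((x))((t)) can be factored as u = z⁻¹ · y where z is a nonzero element of the image of Frac(k[[x]][[t]]) in k((x))((t)) and y is a nonzero element of the image of Frac(k[x⁻¹][[t]]) in k((x))((t)). -/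
/-- The natural embedding of `k[[x]][[t]]` into `k((x))((t))`. -/
noncomputable def stmt18Phi1 (k : Type*) [Field k] :
    PowerSeries (PowerSeries k) →+* LaurentSeries (LaurentSeries k) :=
  (HahnSeries.ofPowerSeries ℤ (LaurentSeries k)).comp
    (PowerSeries.map (HahnSeries.ofPowerSeries ℤ k))

/-- The natural embedding of `k[x⁻¹][[t]]` into `k((x))((t))`, sending the polynomial
variable to `x⁻¹`. -/
noncomputable def stmt18Phi0 (k : Type*) [Field k] :
    PowerSeries (Polynomial k) →+* LaurentSeries (LaurentSeries k) :=
  (HahnSeries.ofPowerSeries ℤ (LaurentSeries k)).comp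
    (PowerSeries.map
      ((Polynomial.aeval (HahnSeries.single (-1 : ℤ) (1 : k) : LaurentSeries k)).toRingHom))

/-!
Write `u = tᴺ · v` with `v ∈ k((x))[[t]]` and rescale by a power of `x` so that the constant
term of `v` is a unit `w` of `k[[x]]`. Then `z = ∑ zₙ tⁿ ∈ k[[x]][[t]]` can be built one
coefficient at a time so that no `t`-coefficient of `v z` contains a positive power of `x`: the
`tⁿ`-coefficient of `v z` is `w zₙ` plus terms involving only `z₀, …, zₙ₋₁`, so `zₙ` can cancel
their positive part. Hence `v z ∈ k[x⁻¹][[t]]`, and `u z` is `v z` times a monomial `tᴺ xᵐ`,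
which is a unit of `Frac(k[x⁻¹][[t]])`.
-/

open PowerSeries (coeff constantCoeff)
open HahnSeries (single ofPowerSeries)

namespace IteratedLaurentSeries

section Splitting

variable {R : Type*} [CommRing R]

noncomputable abbrev evalInvX : Polynomial R →+* LaurentSeries R :=
  (Polynomial.aeval (single (-1 : ℤ) (1 : R) : LaurentSeries R)).toRingHom

theorem evalInvX_monomial (m : ℕ) (a : R) :
    evalInvX (Polynomial.monomial m a) = single (-(m : ℤ)) a := by
  simp [Polynomial.aeval_monomial, HahnSeries.single_pow, HahnSeries.algebraMap_apply',
    HahnSeries.single_mul_single]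

theorem exists_evalInvX_eq (f : LaurentSeries R) (hf : ∀ j : ℤ, 0 < j → f.coeff j = 0) :
    ∃ p : Polynomial R, evalInvX p = f := by
  refine ⟨∑ j ∈ Finset.Icc f.order 0, Polynomial.monomial (-j).toNat (f.coeff j), ?_⟩
  ext i
  have hsum : ∀ j ∈ Finset.Icc f.order 0,
      (single (-((-j).toNat : ℤ)) (f.coeff j) : LaurentSeries R) = single j (f.coeff j) := by
    intro j hj
    rw [Int.toNat_of_nonneg (by simp at hj; omega), neg_neg]
  simp only [map_sum, evalInvX_monomial, Finset.sum_congr rfl hsum, HahnSeries.coeff_sum]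
  simp only [HahnSeries.coeff_single, eq_comm (a := i), Finset.sum_ite_eq', Finset.mem_Icc]
  split_ifs with hi
  · rfl
  · rcases not_and_or.mp hi with hi | hi
    · exact (HahnSeries.coeff_eq_zero_of_lt_order (not_le.mp hi)).symm
    · exact (hf i (not_le.mp hi)).symm

noncomputable def positivePart (f : LaurentSeries R) : PowerSeries R :=
  PowerSeries.mk fun n => if n = 0 then 0 else f.coeff n

theorem coeff_ofPowerSeries_positivePart (f : LaurentSeries R) {j : ℤ} (hj : 0 < j) :
    (ofPowerSeries ℤ R (positivePart f)).coeff j = f.coeff j := by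
  lift j to ℕ using hj.le
  simp [positivePart, Nat.pos_iff_ne_zero.mp (by exact_mod_cast hj)]

end Splitting

section Corrector

variable {k : Type*} [Field k]

noncomputable def corrector (v : PowerSeries (LaurentSeries k)) (w : PowerSeries k) :
    ℕ → PowerSeries k
  | 0 => w⁻¹
  | n + 1 => -(w⁻¹ * positivePart (∑ j : Fin (n + 1),
      coeff (j + 1) v * ofPowerSeries ℤ k (corrector v w (n - j))))
  decreasing_by exact Nat.lt_succ_of_le (Nat.sub_le n j)

theorem coeff_coeff_mul_corrector_of_pos (v : PowerSeries (LaurentSeries k)) (w : PowerSeries k)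
    (hw : constantCoeff w ≠ 0) (hv : constantCoeff v = ofPowerSeries ℤ k w) (n : ℕ) {j : ℤ}
    (hj : 0 < j) :
    (coeff n (v * (PowerSeries.mk (corrector v w)).map (ofPowerSeries ℤ k))).coeff j = 0 := by
  have hww : w * w⁻¹ = 1 := PowerSeries.mul_inv_cancel w hw
  rw [PowerSeries.coeff_mul, Finset.Nat.sum_antidiagonal_eq_sum_range_succ_mk,
    Finset.sum_range_succ']
  cases n with
  | zero =>
    simp [corrector, hv, ← map_mul, hww, HahnSeries.coeff_one, hj.ne']
  | succ n =>
    set S := ∑ i ∈ Finset.range (n + 1),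
      coeff (i + 1) v * ofPowerSeries ℤ k (corrector v w (n - i))
    have hz : corrector v w (n + 1) = -(w⁻¹ * positivePart S) := by
      rw [corrector, Fin.sum_univ_eq_sum_range
        (fun i => coeff (i + 1) v * ofPowerSeries ℤ k (corrector v w (n - i)))]
    simp only [PowerSeries.coeff_map, PowerSeries.coeff_mk, Nat.succ_sub_succ,
      Nat.sub_zero, hz, PowerSeries.coeff_zero_eq_constantCoeff_apply, hv, mul_neg, ← map_mul,
      ← mul_assoc, hww, one_mul, map_neg, ← sub_eq_add_neg, HahnSeries.coeff_sub,
      coeff_ofPowerSeries_positivePart S hj]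
    exact sub_self _

theorem exists_map_evalInvX_eq_mul (v : PowerSeries (LaurentSeries k)) (w : PowerSeries k)
    (hw : constantCoeff w ≠ 0) (hv : constantCoeff v = ofPowerSeries ℤ k w) :
    ∃ z : PowerSeries (PowerSeries k), z ≠ 0 ∧ ∃ y : PowerSeries (Polynomial k),
      y.map evalInvX = v * z.map (ofPowerSeries ℤ k) := by
  set z := PowerSeries.mk (corrector v w)
  have hz : z ≠ 0 := fun h => by
    simpa [z, corrector, PowerSeries.inv_eq_zero, hw] using congrArg constantCoeff h
  choose p hp using fun n =>
    exists_evalInvX_eq _ fun _ => coeff_coeff_mul_corrector_of_pos v w hw hv n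
  exact ⟨z, hz, PowerSeries.mk p, by
    ext n : 1
    rw [PowerSeries.coeff_map, PowerSeries.coeff_mk, hp]⟩

end Corrector

theorem constantCoeff_powerSeriesPart_ne_zero {R : Type*} [Semiring R] {f : LaurentSeries R}
    (hf : f ≠ 0) : constantCoeff f.powerSeriesPart ≠ 0 := by
  rw [← PowerSeries.coeff_zero_eq_constantCoeff_apply, LaurentSeries.powerSeriesPart_coeff,
    Nat.cast_zero, add_zero]
  exact HahnSeries.coeff_order_eq_zero.not.mpr hf

theorem exists_eq_div_of_mem_closure_range {R K : Type*} [Ring R] [Field K] (φ : R →+* K)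
    {x : K} (hx : x ∈ Subfield.closure (Set.range φ)) : ∃ a b, φ b ≠ 0 ∧ x = φ a / φ b := by
  rw [Subfield.mem_closure_iff, ← RingHom.coe_range, Subring.closure_eq] at hx
  obtain ⟨_, ⟨a, rfl⟩, _, ⟨b, rfl⟩, rfl⟩ := hx
  by_cases hb : φ b = 0
  · exact ⟨0, 1, by simp, by simp [hb]⟩
  · exact ⟨a, b, hb, rfl⟩

variable {k : Type*} [Field k]

theorem stmt18Phi1_injective : Function.Injective (stmt18Phi1 k) := by
  rw [stmt18Phi1, RingHom.coe_comp]
  exact HahnSeries.ofPowerSeries_injective.comp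
    (PowerSeries.map_injective _ HahnSeries.ofPowerSeries_injective)

theorem stmt18Phi0_X : stmt18Phi0 k PowerSeries.X = single 1 1 := by
  simp [stmt18Phi0]

theorem stmt18Phi0_C_X :
    stmt18Phi0 k (PowerSeries.C Polynomial.X) = HahnSeries.C (single (-1) 1) := by
  simp [stmt18Phi0]

theorem single_single_mem_closure_range_stmt18Phi0 (N m : ℤ) :
    single N (single m (1 : k)) ∈ Subfield.closure (Set.range (stmt18Phi0 k)) := by
  have h : single N (single m (1 : k)) =
      stmt18Phi0 k PowerSeries.X ^ N * (stmt18Phi0 k (PowerSeries.C Polynomial.X))⁻¹ ^ m :=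
    calc single N (single m (1 : k))
        = single N 1 * HahnSeries.C (single m 1) := by
          rw [HahnSeries.C_apply, HahnSeries.single_mul_single, add_zero, one_mul]
      _ = single 1 1 ^ N * HahnSeries.C ((single (-1) (1 : k))⁻¹ ^ m) := by
          rw [HahnSeries.inv_single, inv_one, neg_neg, ← RatFunc.single_zpow,
            ← RatFunc.single_zpow]
      _ = _ := by rw [stmt18Phi0_X, stmt18Phi0_C_X, map_zpow₀, map_inv₀]
  rw [h]
  exact mul_mem (zpow_mem (Subfield.subset_closure (Set.mem_range_self _)) _)
    (zpow_mem (inv_mem (Subfield.subset_closure (Set.mem_range_self _))) _)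

theorem exists_mul_stmt18Phi1_mem_closure {u : LaurentSeries (LaurentSeries k)} (hu : u ≠ 0) :
    ∃ z, stmt18Phi1 k z ≠ 0 ∧
      u * stmt18Phi1 k z ∈ Subfield.closure (Set.range (stmt18Phi0 k)) := by
  set c := constantCoeff u.powerSeriesPart
  have hc : c ≠ 0 := constantCoeff_powerSeriesPart_ne_zero hu
  obtain ⟨z, hz, y, hy⟩ := exists_map_evalInvX_eq_mul
    (PowerSeries.C (single (-c.order) 1) * u.powerSeriesPart) c.powerSeriesPart
    (constantCoeff_powerSeriesPart_ne_zero hc)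
    (by rw [map_mul, PowerSeries.constantCoeff_C, LaurentSeries.ofPowerSeries_powerSeriesPart])
  refine ⟨z, (map_ne_zero_iff _ stmt18Phi1_injective).mpr hz, ?_⟩
  have hy' : stmt18Phi0 k y = HahnSeries.C (single (-c.order) 1) *
      ofPowerSeries ℤ _ u.powerSeriesPart * stmt18Phi1 k z := by
    have h := congrArg (ofPowerSeries ℤ _) hy
    rwa [map_mul, map_mul, HahnSeries.ofPowerSeries_C] at h
  have hunit : single u.order (single c.order (1 : k)) * HahnSeries.C (single (-c.order) 1) =
      single u.order 1 := by
    rw [HahnSeries.C_apply, HahnSeries.single_mul_single, HahnSeries.single_mul_single,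
      add_zero, add_neg_cancel, one_mul, HahnSeries.single_zero_one]
  have h : u * stmt18Phi1 k z = single u.order (single c.order 1) * stmt18Phi0 k y := by
    rw [hy', ← mul_assoc, ← mul_assoc, hunit, LaurentSeries.single_order_mul_powerSeriesPart]
  rw [h]
  exact mul_mem (single_single_mem_closure_range_stmt18Phi0 _ _)
    (Subfield.subset_closure (Set.mem_range_self y))

end IteratedLaurentSeries

theorem stmt_18_general (k : Type*) [Field k]
    (u : LaurentSeries (LaurentSeries k)) (hu : u ≠ 0) :
    ∃ z y : LaurentSeries (LaurentSeries k), z ≠ 0 ∧ y ≠ 0 ∧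
      (∃ a b : PowerSeries (PowerSeries k),
        stmt18Phi1 k b ≠ 0 ∧ z = stmt18Phi1 k a / stmt18Phi1 k b) ∧
      (∃ c d : PowerSeries (Polynomial k),
        stmt18Phi0 k d ≠ 0 ∧ y = stmt18Phi0 k c / stmt18Phi0 k d) ∧
      u = z⁻¹ * y := by
  obtain ⟨z, hz, hmem⟩ := IteratedLaurentSeries.exists_mul_stmt18Phi1_mem_closure hu
  refine ⟨stmt18Phi1 k z, u * stmt18Phi1 k z, hz, mul_ne_zero hu hz,
    IteratedLaurentSeries.exists_eq_div_of_mem_closure_range _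
      (Subfield.subset_closure (Set.mem_range_self z)),
    IteratedLaurentSeries.exists_eq_div_of_mem_closure_range _ hmem, ?_⟩
  rw [mul_comm u, inv_mul_cancel_left₀ hz]

/-- Every invertible element `u` of `k((x))((t))` factors as `u = z⁻¹ * y` with `z` a
nonzero element of (the image of) `Frac(k[[x]][[t]])` and `y` a nonzero element of
(the image of) `Frac(k[x⁻¹][[t]])`. -/
theorem stmt_18 (k : Type*) [Field k] (n : ℕ) (hn : 1 ≤ n)
    (u : LaurentSeries (LaurentSeries k)) (hu : u ≠ 0) :
    ∃ z y : LaurentSeries (LaurentSeries k), z ≠ 0 ∧ y ≠ 0 ∧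
      (∃ a b : PowerSeries (PowerSeries k),
        stmt18Phi1 k b ≠ 0 ∧ z = stmt18Phi1 k a / stmt18Phi1 k b) ∧
      (∃ c d : PowerSeries (Polynomial k),
        stmt18Phi0 k d ≠ 0 ∧ y = stmt18Phi0 k c / stmt18Phi0 k d) ∧
      u = z⁻¹ * y :=
  stmt_18_general k u hu
end
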